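/- Let x be a complex number with |x| > 27. Then ∑_{k=0}^∞ (C(2k,k)·C(3k,k)/x^k)·(3H_{3k} − H_k) = log(x/(x−27)) · ∑_{k=0}^∞ C(2k,k)·C(3k,k)/x^k, both series being convergent. -/

import Mathlib

/-!
Write `a n = C(2n, n) C(3n, n) = (3n)! / n! ^ 3`, so that `(n+1)² a (n+1) = 3(3n+1)(3n+2) a n`
and `a n ≤ 27 ^ n`. Multiplying `log (x / (x - 27)) = ∑ (27/x) ^ k / k` by `∑ a n / x ^ n`
(both absolutely convergent for `|x| > 27`), the coefficient of `x ^ -n` in the Cauchy product is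
`∑_{1 ≤ k ≤ n} 27 ^ k / k · a (n - k)`. Both this convolution and `a n (3 H_{3n} - H_n)` vanish at
`n = 0` and satisfy `(n+1)² u (n+1) = 3(3n+1)(3n+2) u n + 27(2n+1) a n`: for the harmonic side this
is `3 H_{3n+3} - H_{n+1} = 3 H_{3n} - H_n + 3/(3n+1) + 3/(3n+2)`, for the convolution the
recurrence of `a` turns the defect into a telescoping sum.
-/

/-- The `n`-th harmonic number `H_n = ∑_{i=1}^n 1/i`. -/
noncomputable def harm (n : ℕ) : ℝ := ∑ i ∈ Finset.range n, 1 / (i + 1 : ℝ)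

open Finset Nat

def binomProd (n : ℕ) : ℕ := (2 * n).choose n * (3 * n).choose n

theorem binomProd_zero : binomProd 0 = 1 := rfl

theorem binomProd_mul_factorial_pow (n : ℕ) : binomProd n * n ! ^ 3 = (3 * n)! := by
  have h2 := choose_mul_factorial_mul_factorial (show n ≤ 2 * n by omega)
  have h3 := choose_mul_factorial_mul_factorial (show n ≤ 3 * n by omega)
  rw [show 2 * n - n = n by omega] at h2
  rw [show 3 * n - n = 2 * n by omega, ← h2] at h3
  rw [binomProd, ← h3]
  ring

theorem succ_sq_mul_binomProd_succ (n : ℕ) :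
    (n + 1) ^ 2 * binomProd (n + 1) = 3 * (3 * n + 1) * (3 * n + 2) * binomProd n := by
  have h := binomProd_mul_factorial_pow (n + 1)
  simp only [show 3 * (n + 1) = 3 * n + 1 + 1 + 1 by ring, factorial_succ] at h
  rw [← binomProd_mul_factorial_pow n] at h
  refine Nat.eq_of_mul_eq_mul_right (show 0 < (n + 1) * n ! ^ 3 by positivity) ?_
  linear_combination h

theorem binomProd_le (n : ℕ) : binomProd n ≤ 27 ^ n := by
  induction n with
  | zero => simp [binomProd]
  | succ n ih =>
    refine le_of_mul_le_mul_left (a := (n + 1) ^ 2) ?_ (by positivity)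
    calc (n + 1) ^ 2 * binomProd (n + 1) = 3 * (3 * n + 1) * (3 * n + 2) * binomProd n :=
          succ_sq_mul_binomProd_succ n
      _ ≤ 27 * (n + 1) ^ 2 * 27 ^ n := Nat.mul_le_mul (by nlinarith) ih
      _ = (n + 1) ^ 2 * 27 ^ (n + 1) := by ring

theorem cast_succ_sq_mul_binomProd_succ (n : ℕ) :
    ((n : ℝ) + 1) ^ 2 * binomProd (n + 1) = 3 * (3 * n + 1) * (3 * n + 2) * binomProd n := by
  exact_mod_cast succ_sq_mul_binomProd_succ n

/-- The `k = 0` term vanishes (`27 ^ 0 / 0 = 0`), matching the missing constant term of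
`-log (1 - z) = ∑ z ^ k / k`. -/
noncomputable def logConv (n : ℕ) : ℝ := ∑ k ∈ range (n + 1), (27 : ℝ) ^ k / k * binomProd (n - k)

theorem logConv_term_telescope (k m : ℕ) :
    (27 : ℝ) ^ (k + 1) / (k + 1 : ℕ) * (((k + m + 1 : ℕ) + 1) ^ 2 * binomProd (m + 1) -
        3 * (3 * (k + m + 1 : ℕ) + 1) * (3 * (k + m + 1 : ℕ) + 2) * binomProd m) =
      27 ^ (k + 1) * (k + 2 * m + 3) * binomProd (m + 1) -
        27 ^ (k + 2) * (k + 2 * m + 2) * binomProd m := by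
  have hb := cast_succ_sq_mul_binomProd_succ m
  push_cast
  field_simp
  linear_combination (27 : ℝ) ^ (k + 1) * hb

theorem logConv_succ (n : ℕ) :
    ((n : ℝ) + 1) ^ 2 * logConv (n + 1) =
      3 * (3 * n + 1) * (3 * n + 2) * logConv n + 27 * (2 * n + 1) * binomProd n := by
  set q : ℝ := 3 * (3 * n + 1) * (3 * n + 2)
  let c : ℕ → ℝ := fun k => 27 ^ (k + 1) / (k + 1 : ℕ)
  let W : ℕ → ℝ := fun k => 27 ^ k * (2 * n + 2 - k) * binomProd (n + 1 - k)
  have hsplit : ((n : ℝ) + 1) ^ 2 * logConv (n + 1) - q * logConv n =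
      ((n : ℝ) + 1) ^ 2 * (27 ^ (n + 1) / (n + 1 : ℕ)) + ∑ k ∈ range n,
        (((n : ℝ) + 1) ^ 2 * (c k * binomProd (n - k)) - q * (c k * binomProd (n - (k + 1)))) := by
    simp only [logConv, sum_range_succ _ (n + 1), sum_range_succ' _ n, Nat.add_sub_add_right,
      Nat.sub_self, CharP.cast_eq_zero, div_zero, zero_mul, add_zero, binomProd_zero, cast_one,
      mul_one, mul_add, mul_sum, sum_sub_distrib, c]
    ring
  have hterm : ∀ k ∈ range n, ((n : ℝ) + 1) ^ 2 * (c k * binomProd (n - k)) -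
      q * (c k * binomProd (n - (k + 1))) = W (k + 1) - W (k + 1 + 1) := by
    intro k hk
    obtain ⟨m, rfl⟩ := Nat.exists_eq_add_of_lt (mem_range.1 hk)
    simp only [W, q, c, show k + m + 1 - k = m + 1 by omega, show k + m + 1 - (k + 1) = m by omega,
      show k + m + 1 + 1 - (k + 1) = m + 1 by omega, show k + m + 1 + 1 - (k + 1 + 1) = m by omega]
    have h := logConv_term_telescope k m
    push_cast at h ⊢
    linear_combination h
  rw [sum_congr rfl hterm, sum_range_sub' (fun k => W (k + 1))] at hsplit
  simp only [W, zero_add, pow_one, Nat.add_sub_cancel, Nat.sub_self, binomProd_zero] at hsplit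
  push_cast at hsplit
  field_simp at hsplit
  linear_combination hsplit

theorem harm_succ (n : ℕ) : harm (n + 1) = harm n + 1 / (n + 1) := by
  simp [harm, sum_range_succ]

theorem binomProd_mul_harm_succ (n : ℕ) :
    ((n : ℝ) + 1) ^ 2 * (binomProd (n + 1) * (3 * harm (3 * (n + 1)) - harm (n + 1))) =
      3 * (3 * n + 1) * (3 * n + 2) * (binomProd n * (3 * harm (3 * n) - harm n)) +
        27 * (2 * n + 1) * binomProd n := by
  have hb := cast_succ_sq_mul_binomProd_succ n
  have hh : 3 * harm (3 * (n + 1)) - harm (n + 1) =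
      3 * harm (3 * n) - harm n + 3 / (3 * n + 1) + 3 / (3 * n + 2) := by
    rw [show 3 * (n + 1) = 3 * n + 1 + 1 + 1 by ring]
    simp only [harm_succ]
    push_cast
    field_simp
    ring
  rw [hh, ← mul_assoc, hb]
  field_simp
  ring

theorem logConv_eq (n : ℕ) : logConv n = binomProd n * (3 * harm (3 * n) - harm n) := by
  induction n with
  | zero => simp [logConv, harm]
  | succ n ih =>
    refine mul_left_cancel₀ (pow_ne_zero 2 n.cast_add_one_ne_zero) ?_
    rw [logConv_succ, binomProd_mul_harm_succ, ih]

theorem cast_choose_mul_cast_choose (n : ℕ) :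
    ((2 * n).choose n : ℝ) * ((3 * n).choose n : ℝ) = binomProd n := by
  simp [binomProd]

theorem Complex.hasSum_pow_div_log_div_sub {c x : ℂ} (h : ‖c‖ < ‖x‖) :
    HasSum (fun k : ℕ => (c / x) ^ k / k) (log (x / (x - c))) := by
  have hx : x ≠ 0 := norm_pos_iff.1 ((norm_nonneg c).trans_lt h)
  have hw : ‖c / x‖ < 1 := by rwa [norm_div, div_lt_one (norm_pos_iff.2 hx)]
  have h1w : 1 - c / x = (x / (x - c))⁻¹ := by
    rw [inv_div]
    field_simp
  have harg : (1 - c / x).arg ≠ Real.pi := by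
    rw [sub_eq_add_neg]
    exact slitPlane_arg_ne_pi (mem_slitPlane_of_norm_lt_one (by rwa [norm_neg]))
  rw [← inv_inv (x / (x - c)), ← h1w, log_inv _ harg]
  exact hasSum_taylorSeries_neg_log hw

theorem Complex.summable_norm_pow_div_natCast {z : ℂ} (hz : ‖z‖ < 1) :
    Summable fun k : ℕ => ‖z ^ k / k‖ := by
  refine (summable_geometric_of_lt_one (norm_nonneg z) hz).of_nonneg_of_le (fun _ => norm_nonneg _)
    fun k => ?_
  rcases k.eq_zero_or_pos with rfl | hk
  · simp
  · rw [norm_div, norm_pow, Complex.norm_natCast]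
    exact div_le_self (by positivity) (by exact_mod_cast hk)

theorem summable_norm_binomProd_div_pow {x : ℂ} (hx : 27 < ‖x‖) :
    Summable fun k : ℕ => ‖((binomProd k : ℝ) : ℂ) / x ^ k‖ := by
  have hx0 : 0 < ‖x‖ := by linarith
  refine (summable_geometric_of_lt_one (by positivity) ((div_lt_one hx0).2 hx)).of_nonneg_of_le
    (fun _ => norm_nonneg _) fun k => ?_
  rw [norm_div, norm_pow, Complex.norm_real, Real.norm_natCast, div_pow]
  gcongr
  exact_mod_cast binomProd_le k

theorem sum_range_log_mul_binomProd (x : ℂ) (n : ℕ) :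
    ∑ k ∈ range (n + 1), (27 / x) ^ k / k * (((binomProd (n - k) : ℝ) : ℂ) / x ^ (n - k)) =
      ((binomProd n : ℝ) : ℂ) / x ^ n * ((3 * harm (3 * n) - harm n : ℝ) : ℂ) := by
  have hterm : ∀ k ∈ range (n + 1), (27 / x) ^ k / k * (((binomProd (n - k) : ℝ) : ℂ) / x ^ (n - k)) =
      (27 : ℂ) ^ k / k * binomProd (n - k) / x ^ n := by
    intro k hk
    rw [← pow_mul_pow_sub x (mem_range_succ_iff.1 hk)]
    push_cast
    ring
  rw [sum_congr rfl hterm, ← sum_div, div_mul_eq_mul_div, ← Complex.ofReal_mul, ← logConv_eq, logConv]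
  push_cast
  rfl

theorem stmt_9 (x : ℂ) (hx : ‖x‖ > 27) :
    Summable (fun k : ℕ => (((Nat.choose (2 * k) k : ℝ) * (Nat.choose (3 * k) k : ℝ) : ℝ) : ℂ) / x ^ k * ((3 * harm (3 * k) - harm k : ℝ) : ℂ)) ∧
    Summable (fun k : ℕ => (((Nat.choose (2 * k) k : ℝ) * (Nat.choose (3 * k) k : ℝ) : ℝ) : ℂ) / x ^ k) ∧
    ∑' k : ℕ, (((Nat.choose (2 * k) k : ℝ) * (Nat.choose (3 * k) k : ℝ) : ℝ) : ℂ) / x ^ k * ((3 * harm (3 * k) - harm k : ℝ) : ℂ) =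
      Complex.log (x / (x - 27)) * ∑' k : ℕ, (((Nat.choose (2 * k) k : ℝ) * (Nat.choose (3 * k) k : ℝ) : ℝ) : ℂ) / x ^ k := by
  simp only [cast_choose_mul_cast_choose]
  have hc : ‖(27 : ℂ)‖ < ‖x‖ := by simpa using hx
  have hL := Complex.summable_norm_pow_div_natCast
    (by rwa [norm_div, div_lt_one ((norm_nonneg _).trans_lt hc)] : ‖27 / x‖ < 1)
  have hF := summable_norm_binomProd_div_pow hx
  refine ⟨?_, hF.of_norm, ?_⟩
  · simpa only [sum_range_log_mul_binomProd] using
      (summable_norm_sum_mul_range_of_summable_norm hL hF).of_norm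
  · rw [← (Complex.hasSum_pow_div_log_div_sub hc).tsum_eq,
      tsum_mul_tsum_eq_tsum_sum_range_of_summable_norm hL hF]
    simp only [sum_range_log_mul_binomProd]
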